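/- H⁰ is closed under the harmonic product *, and the ℚ-linear map sending a finitely supported sequence (w_n)_{n≥0} of elements of H⁰ to ∑_{n≥0} w_n * e₁^{*n} ∈ H¹ (where e₁^{*n} denotes the n-fold harmonic power of e₁, with e₁^{*0} = 1) is a bijection onto H¹. In other words, (H¹, *) is a polynomial algebra over (H⁰, *) in the single variable e₁. -/

import Mathlib

noncomputable section

abbrev H : Type := FreeAlgebra ℚ (Fin 2)

def e0 : H := FreeAlgebra.ι ℚ 0
def e1 : H := FreeAlgebra.ι ℚ 1

/-- `e_{(m)} = e₁ e₀^{m-1}`. -/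
def eE (m : ℕ+) : H := e1 * e0 ^ ((m : ℕ) - 1)

/-- `e_k` for an index `k`. -/
def eIdx : List ℕ+ → H
  | [] => 1
  | m :: ks => eE m * eIdx ks

/-- An index is admissible if it is empty or its last entry is ≥ 2. -/
def Admissible (k : List ℕ+) : Prop := ∀ a : ℕ+, k.getLast? = some a → 2 ≤ a

/-- `H¹`, the span of the `e_k`. -/
def H1 : Submodule ℚ H := Submodule.span ℚ (Set.range eIdx)

/-- `H⁰`, the span of the `e_k` for admissible `k`. -/
def H0 : Submodule ℚ H := Submodule.span ℚ (eIdx '' {k | Admissible k})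

/-- The `n`-fold harmonic power `e₁^{*n}` of `e₁`. -/
def harmPow (mul : H →ₗ[ℚ] H →ₗ[ℚ] H) : ℕ → H
  | 0 => 1
  | n + 1 => mul e1 (harmPow mul n)

/-! Filter `H¹` by the number of trailing ones of the index: `Fil n` is spanned by the `e_k` whose
index ends in fewer than `n` ones. Every term of the recursion for `*` ends in a single block
`e_{(m)}`, and only `m = 1` contributes a trailing one, so `e_k * e_l` has at most as many
trailing ones as `k` and `l` together; in particular `H⁰ = Fil 1` is closed under `*`.
Modulo `Fil n` one finds `e₁^{*n} ≡ n! e₁ⁿ` and, for `w ∈ H⁰`, `w * e₁^{*n} ≡ n! w e₁ⁿ`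
(concatenation product). The `e_k` being linearly independent, `w ↦ w e₁ⁿ` is
injective on `H⁰` with image meeting `Fil n` trivially, so comparing top terms gives injectivity,
while induction on `n` shows that `Fil n` lies in the image, whence surjectivity. -/

open scoped Nat

lemma Submodule.apply_mem_of_mem_span {R M N : Type*} [CommSemiring R] [AddCommMonoid M]
    [Module R M] [AddCommMonoid N] [Module R N] {f : M →ₗ[R] N} {s : Set M} {p : Submodule R N}
    (h : ∀ x ∈ s, f x ∈ p) {x : M} (hx : x ∈ Submodule.span R s) : f x ∈ p :=
  (Submodule.span_le (p := p.comap f)).mpr h hx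

lemma Submodule.apply₂_mem_of_mem_span {R M N P : Type*} [CommSemiring R] [AddCommMonoid M]
    [Module R M] [AddCommMonoid N] [Module R N] [AddCommMonoid P] [Module R P]
    {f : M →ₗ[R] N →ₗ[R] P} {s : Set M} {t : Set N} {p : Submodule R P}
    (h : ∀ x ∈ s, ∀ y ∈ t, f x y ∈ p) {x : M} {y : N}
    (hx : x ∈ Submodule.span R s) (hy : y ∈ Submodule.span R t) : f x y ∈ p :=
  Submodule.apply_mem_of_mem_span (f := f x)
    (fun y hy => Submodule.apply_mem_of_mem_span (f := f.flip y) (fun x hx => h x hx y hy) hx) hy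

lemma PNat.add_ne_one (a b : ℕ+) : a + b ≠ 1 :=
  (lt_of_le_of_lt (one_le (a := a)) (PNat.lt_add_right a b)).ne'

lemma eIdx_append (k l : List ℕ+) : eIdx (k ++ l) = eIdx k * eIdx l := by
  induction k with
  | nil => simp [eIdx]
  | cons a k ih => simp [eIdx, ih, mul_assoc]

lemma eIdx_concat (k : List ℕ+) (a : ℕ+) : eIdx (k ++ [a]) = eIdx k * eE a := by
  simp [eIdx_append, eIdx]

lemma eE_one : eE 1 = e1 := by simp [eE]

lemma eIdx_replicate_one (n : ℕ) : eIdx (List.replicate n 1) = e1 ^ n := by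
  induction n with
  | zero => rfl
  | succ n ih => rw [List.replicate_succ', eIdx_concat, ih, eE_one, pow_succ]

lemma eIdx_singleton_one : eIdx [1] = e1 := by
  simpa using eIdx_replicate_one 1

def word (k : List ℕ+) : List (Fin 2) := k.flatMap fun m => 1 :: List.replicate ((m : ℕ) - 1) 0

lemma eIdx_eq_prod_word (k : List ℕ+) : eIdx k = ((word k).map (FreeAlgebra.ι ℚ)).prod := by
  induction k with
  | nil => rfl
  | cons m k ih => simp [word, eIdx, eE, e0, e1, ih, mul_assoc]

lemma List.replicate_append_inj {α : Type*} {x : α} {a b : ℕ} {u v : List α}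
    (hu : u.head? ≠ some x) (hv : v.head? ≠ some x)
    (h : List.replicate a x ++ u = List.replicate b x ++ v) : a = b ∧ u = v := by
  induction a generalizing b with
  | zero =>
    cases b with
    | zero => simpa using h
    | succ b => simp [List.replicate_succ] at h; simp [h] at hu
  | succ a ih =>
    cases b with
    | zero => simp [List.replicate_succ] at h; simp [← h] at hv
    | succ b => simpa [List.replicate_succ] using ih (by simpa [List.replicate_succ] using h)

lemma head?_word_ne_zero (k : List ℕ+) : (word k).head? ≠ some 0 := by
  cases k <;> simp [word]

lemma word_injective : Function.Injective word := by
  intro k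
  induction k with
  | nil => rintro (_ | ⟨b, l⟩) h <;> simp_all [word]
  | cons a k ih =>
    rintro (_ | ⟨b, l⟩) h
    · simp [word] at h
    · have h' : List.replicate ((a : ℕ) - 1) 0 ++ word k =
          List.replicate ((b : ℕ) - 1) 0 ++ word l := by
        simpa [word] using h
      obtain ⟨hab, hkl⟩ :=
        List.replicate_append_inj (head?_word_ne_zero k) (head?_word_ne_zero l) h'
      have hab' : a = b := PNat.coe_injective (by have := a.pos; have := b.pos; omega)
      rw [hab', ih hkl]

lemma linearIndependent_eIdx : LinearIndependent ℚ eIdx := by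
  have h_eq : eIdx = FreeAlgebra.basisFreeMonoid ℚ (Fin 2) ∘ FreeMonoid.ofList ∘ word := by
    ext k
    simp [eIdx_eq_prod_word, FreeAlgebra.basisFreeMonoid, FreeAlgebra.equivMonoidAlgebraFreeMonoid,
      MonoidAlgebra.lift_single]
  rw [h_eq]
  exact (FreeAlgebra.basisFreeMonoid ℚ (Fin 2)).linearIndependent.comp _
    (FreeMonoid.ofList.injective.comp word_injective)

def trailingOnes (k : List ℕ+) : ℕ := (k.rtakeWhile (· == 1)).length

@[simp] lemma trailingOnes_nil : trailingOnes [] = 0 := rfl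

@[simp] lemma trailingOnes_concat_one (k : List ℕ+) :
    trailingOnes (k ++ [1]) = trailingOnes k + 1 := by
  simp [trailingOnes, List.rtakeWhile_concat_pos]

lemma trailingOnes_concat_of_ne_one (k : List ℕ+) {a : ℕ+} (ha : a ≠ 1) :
    trailingOnes (k ++ [a]) = 0 := by
  simp [trailingOnes, List.rtakeWhile_concat_neg, ha]

lemma admissible_concat_iff (k : List ℕ+) (a : ℕ+) : Admissible (k ++ [a]) ↔ a ≠ 1 := by
  simp only [Admissible, List.getLast?_concat, Option.some.injEq, forall_eq']
  rw [← PNat.coe_le_coe, Ne, ← PNat.coe_inj]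
  simp only [PNat.val_ofNat]
  have := a.pos
  omega

lemma admissible_iff_trailingOnes_eq_zero (k : List ℕ+) : Admissible k ↔ trailingOnes k = 0 := by
  induction k using List.reverseRecOn with
  | nil => simp [Admissible]
  | append_singleton k a _ =>
    rw [admissible_concat_iff]
    by_cases ha : a = 1
    · simp [ha]
    · simp [ha, trailingOnes_concat_of_ne_one]

lemma trailingOnes_append_replicate {k : List ℕ+} (hk : Admissible k) (n : ℕ) :
    trailingOnes (k ++ List.replicate n 1) = n := by
  induction n with
  | zero => simpa [admissible_iff_trailingOnes_eq_zero] using hk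
  | succ n ih => rw [List.replicate_succ', ← List.append_assoc, trailingOnes_concat_one, ih]

lemma exists_admissible_append_replicate (k : List ℕ+) :
    ∃ k₀, Admissible k₀ ∧ k = k₀ ++ List.replicate (trailingOnes k) 1 := by
  induction k using List.reverseRecOn with
  | nil => exact ⟨[], by simp [Admissible]⟩
  | append_singleton k a ih =>
    by_cases ha : a = 1
    · obtain ⟨k₀, hk₀, hk⟩ := ih
      refine ⟨k₀, hk₀, ?_⟩
      rw [ha, trailingOnes_concat_one, List.replicate_succ', ← List.append_assoc, ← hk]
    · exact ⟨k ++ [a], (admissible_concat_iff k a).mpr ha,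
        by simp [trailingOnes_concat_of_ne_one _ ha]⟩

def Fil (n : ℕ) : Submodule ℚ H := Submodule.span ℚ (eIdx '' {k | trailingOnes k < n})

lemma eIdx_mem_Fil {k : List ℕ+} {n : ℕ} (h : trailingOnes k < n) : eIdx k ∈ Fil n :=
  Submodule.subset_span ⟨k, h, rfl⟩

lemma Fil_mono : Monotone Fil :=
  fun _ _ hmn => Submodule.span_mono (Set.image_mono fun _ hk => lt_of_lt_of_le hk hmn)

lemma Fil_le_H1 (n : ℕ) : Fil n ≤ H1 :=
  Submodule.span_mono (Set.image_subset_range _ _)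

lemma Fil_one_eq_H0 : Fil 1 = H0 := by
  simp [Fil, H0, admissible_iff_trailingOnes_eq_zero]

lemma mul_e1_mem_Fil {n : ℕ} {x : H} (hx : x ∈ Fil n) : x * e1 ∈ Fil (n + 1) := by
  refine Submodule.apply_mem_of_mem_span (f := LinearMap.mulRight ℚ e1) ?_ hx
  rintro _ ⟨k, hk, rfl⟩
  rw [LinearMap.mulRight_apply, ← eE_one, ← eIdx_concat]
  exact eIdx_mem_Fil (by simpa using hk)

lemma mul_eE_mem_Fil_one {n : ℕ} {a : ℕ+} (ha : a ≠ 1) {x : H} (hx : x ∈ Fil n) :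
    x * eE a ∈ Fil 1 := by
  refine Submodule.apply_mem_of_mem_span (f := LinearMap.mulRight ℚ (eE a)) ?_ hx
  rintro _ ⟨k, -, rfl⟩
  rw [LinearMap.mulRight_apply, ← eIdx_concat]
  exact eIdx_mem_Fil (by simp [trailingOnes_concat_of_ne_one _ ha])

lemma mul_eE_mem_Fil {k : List ℕ+} (a : ℕ+) {n : ℕ} {x : H}
    (hx : x ∈ Fil (n + trailingOnes k + 1)) :
    x * eE a ∈ Fil (n + trailingOnes (k ++ [a]) + 1) := by
  by_cases ha : a = 1
  · subst ha
    simpa [eE_one, add_assoc] using mul_e1_mem_Fil hx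
  · exact Fil_mono (by omega) (mul_eE_mem_Fil_one ha hx)

lemma mul_e1_pow_mem_Fil {x : H} (hx : x ∈ H0) (n : ℕ) : x * e1 ^ n ∈ Fil (n + 1) := by
  induction n with
  | zero => simpa [Fil_one_eq_H0] using hx
  | succ n ih => simpa [pow_succ, mul_assoc] using mul_e1_mem_Fil ih

lemma one_mem_H0 : (1 : H) ∈ H0 :=
  Submodule.subset_span ⟨[], by simp [Admissible], rfl⟩

lemma e1_pow_mem_Fil (n : ℕ) : e1 ^ n ∈ Fil (n + 1) := by
  simpa using mul_e1_pow_mem_Fil one_mem_H0 n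

lemma e1_mem_Fil_two : e1 ∈ Fil 2 := by
  simpa using e1_pow_mem_Fil 1

lemma eq_zero_of_mul_e1_pow_mem_Fil {x : H} (hx : x ∈ H0) {n : ℕ} (h : x * e1 ^ n ∈ Fil n) :
    x = 0 := by
  set S := (· ++ List.replicate n 1) '' {k | Admissible k}
  have hS : x * e1 ^ n ∈ Submodule.span ℚ (eIdx '' S) := by
    refine Submodule.apply_mem_of_mem_span (f := LinearMap.mulRight ℚ (e1 ^ n)) ?_ hx
    rintro _ ⟨k, hk, rfl⟩
    rw [LinearMap.mulRight_apply, ← eIdx_replicate_one, ← eIdx_append]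
    exact Submodule.subset_span ⟨_, ⟨k, hk, rfl⟩, rfl⟩
  have hdisj : Disjoint S {k | trailingOnes k < n} := by
    rw [Set.disjoint_left]
    rintro _ ⟨k, hk, rfl⟩
    simp [trailingOnes_append_replicate hk]
  have hzero := Submodule.disjoint_def.mp (linearIndependent_eIdx.disjoint_span_image hdisj) _ hS h
  have he1 : e1 ≠ 0 := FreeAlgebra.ι_ne_zero 1
  simpa [he1] using hzero

def harmonicExpansion (mul : H →ₗ[ℚ] H →ₗ[ℚ] H) : (ℕ →₀ H0) →ₗ[ℚ] H :=
  Finsupp.lsum ℚ fun n => (mul.flip (harmPow mul n)).comp H0.subtype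

lemma harmonicExpansion_apply (mul : H →ₗ[ℚ] H →ₗ[ℚ] H) (w : ℕ →₀ H0) :
    harmonicExpansion mul w = w.sum fun n v => mul (v : H) (harmPow mul n) :=
  rfl

structure IsHarmonicProduct (mul : H →ₗ[ℚ] H →ₗ[ℚ] H) : Prop where
  one_left : ∀ l : List ℕ+, mul (eIdx []) (eIdx l) = eIdx l
  one_right : ∀ k : List ℕ+, mul (eIdx k) (eIdx []) = eIdx k
  concat_concat : ∀ (k l : List ℕ+) (a b : ℕ+),
    mul (eIdx (k ++ [a])) (eIdx (l ++ [b])) =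
      mul (eIdx (k ++ [a])) (eIdx l) * eE b
      + mul (eIdx k) (eIdx (l ++ [b])) * eE a
      - mul (eIdx k) (eIdx l) * eE (a + b)

namespace IsHarmonicProduct

variable {mul : H →ₗ[ℚ] H →ₗ[ℚ] H} (hmul : IsHarmonicProduct mul)
include hmul

lemma mul_eIdx_mem_Fil (k l : List ℕ+) :
    mul (eIdx k) (eIdx l) ∈ Fil (trailingOnes k + trailingOnes l + 1) := by
  induction k using List.reverseRecOn generalizing l with
  | nil => simpa [hmul.one_left] using eIdx_mem_Fil (Nat.lt_succ_self _)
  | append_singleton k a ihk =>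
    induction l using List.reverseRecOn with
    | nil => simpa [hmul.one_right] using eIdx_mem_Fil (Nat.lt_succ_self _)
    | append_singleton l b ihl =>
      rw [hmul.concat_concat]
      refine sub_mem (add_mem (mul_eE_mem_Fil b ihl) ?_) ?_
      · exact Fil_mono (by omega) (mul_eE_mem_Fil (k := k) a (n := trailingOnes (l ++ [b]))
          (Fil_mono (by omega) (ihk (l ++ [b]))))
      · exact Fil_mono (by omega) (mul_eE_mem_Fil_one (PNat.add_ne_one a b) (ihk l))

lemma mul_mem_Fil {m n : ℕ} {u v : H} (hu : u ∈ Fil m) (hv : v ∈ Fil n) :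
    mul u v ∈ Fil (m + n - 1) := by
  refine Submodule.apply₂_mem_of_mem_span ?_ hu hv
  rintro _ ⟨k, hk : trailingOnes k < m, rfl⟩ _ ⟨l, hl : trailingOnes l < n, rfl⟩
  exact Fil_mono (by omega) (hmul.mul_eIdx_mem_Fil k l)

lemma mul_mem_H0 {u v : H} (hu : u ∈ H0) (hv : v ∈ H0) : mul u v ∈ H0 := by
  rw [← Fil_one_eq_H0] at hu hv ⊢
  simpa using hmul.mul_mem_Fil hu hv

lemma mul_eIdx_e1_pow_sub_mem {k : List ℕ+} (hk : Admissible k) (n : ℕ) :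
    mul (eIdx k) (e1 ^ n) - eIdx k * e1 ^ n ∈ Fil n := by
  induction n generalizing k with
  | zero =>
    rw [pow_zero, mul_one, show (1 : H) = eIdx [] from rfl, hmul.one_right, sub_self]
    exact zero_mem _
  | succ n ih =>
    obtain rfl | ⟨K, a, rfl⟩ := List.eq_nil_or_concat' k
    · rw [← eIdx_replicate_one, hmul.one_left]
      simp [eIdx]
    have ha : a ≠ 1 := (admissible_concat_iff K a).mp hk
    have h_rec := hmul.concat_concat K (List.replicate n 1) a 1
    rw [← List.replicate_succ', eIdx_replicate_one, eIdx_replicate_one, eE_one] at h_rec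
    have hB := hmul.mul_mem_Fil (eIdx_mem_Fil (Nat.lt_succ_self (trailingOnes K)))
      (e1_pow_mem_Fil (n + 1))
    have hC := hmul.mul_mem_Fil (eIdx_mem_Fil (Nat.lt_succ_self (trailingOnes K)))
      (e1_pow_mem_Fil n)
    convert add_mem (mul_e1_mem_Fil (ih hk)) (sub_mem
      (Fil_mono (by omega) (mul_eE_mem_Fil_one ha hB))
      (Fil_mono (by omega) (mul_eE_mem_Fil_one (PNat.add_ne_one a 1) hC))) using 1
    rw [h_rec, pow_succ]
    noncomm_ring

lemma mul_e1_e1_pow_sub_mem (n : ℕ) :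
    mul e1 (e1 ^ n) - ((n : ℚ) + 1) • e1 ^ (n + 1) ∈ Fil n := by
  induction n with
  | zero =>
    rw [pow_zero, show (1 : H) = eIdx [] from rfl, ← eIdx_singleton_one, hmul.one_right]
    simp
  | succ n ih =>
    have h_rec := hmul.concat_concat [] (List.replicate n 1) 1 1
    rw [List.nil_append, hmul.one_left, hmul.one_left, ← List.replicate_succ', eIdx_singleton_one,
      eIdx_replicate_one, eIdx_replicate_one, eE_one] at h_rec
    convert sub_mem (mul_e1_mem_Fil ih)
      (Fil_mono (by omega) (mul_eE_mem_Fil_one (PNat.add_ne_one 1 1) (e1_pow_mem_Fil n))) using 1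
    rw [h_rec]
    simp only [sub_mul, smul_mul_assoc, ← pow_succ]
    push_cast
    module

lemma harmPow_sub_mem (n : ℕ) : harmPow mul n - (n ! : ℚ) • e1 ^ n ∈ Fil n := by
  induction n with
  | zero => simp [harmPow]
  | succ n ih =>
    have h_split : harmPow mul (n + 1) - ((n + 1) ! : ℚ) • e1 ^ (n + 1) =
        mul e1 (harmPow mul n - (n ! : ℚ) • e1 ^ n)
          + (n ! : ℚ) • (mul e1 (e1 ^ n) - ((n : ℚ) + 1) • e1 ^ (n + 1)) := by
      rw [harmPow, map_sub, map_smul, Nat.factorial_succ]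
      push_cast
      module
    rw [h_split]
    refine add_mem (Fil_mono (by omega) (hmul.mul_mem_Fil e1_mem_Fil_two ih)) ?_
    exact Submodule.smul_mem _ _ (Fil_mono (by omega) (hmul.mul_e1_e1_pow_sub_mem n))

lemma harmPow_mem_Fil (n : ℕ) : harmPow mul n ∈ Fil (n + 1) := by
  simpa using add_mem (Fil_mono (by omega) (hmul.harmPow_sub_mem n))
    (Submodule.smul_mem _ (n ! : ℚ) (e1_pow_mem_Fil n))

lemma mul_harmPow_sub_mem {w : H} (hw : w ∈ H0) (n : ℕ) :
    mul w (harmPow mul n) - (n ! : ℚ) • (w * e1 ^ n) ∈ Fil n := by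
  let f := mul.flip (harmPow mul n) - (n ! : ℚ) • LinearMap.mulRight ℚ (e1 ^ n)
  refine Submodule.apply_mem_of_mem_span (f := f) ?_ hw
  rintro _ ⟨k, hk, rfl⟩
  have h_split : f (eIdx k) = mul (eIdx k) (harmPow mul n - (n ! : ℚ) • e1 ^ n)
      + (n ! : ℚ) • (mul (eIdx k) (e1 ^ n) - eIdx k * e1 ^ n) := by
    simp only [f, LinearMap.sub_apply, LinearMap.smul_apply, LinearMap.flip_apply,
      LinearMap.mulRight_apply, map_sub, map_smul]
    module
  rw [h_split]
  refine add_mem (Fil_mono (by omega) (hmul.mul_mem_Fil (m := 1) ?_ (hmul.harmPow_sub_mem n))) ?_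
  · exact eIdx_mem_Fil (by simpa [admissible_iff_trailingOnes_eq_zero] using hk)
  · exact Submodule.smul_mem _ _ (hmul.mul_eIdx_e1_pow_sub_mem hk n)

lemma harmonicExpansion_sub_mem (w : ℕ →₀ H0) {N : ℕ} (hN : w.support ⊆ Finset.range (N + 1)) :
    harmonicExpansion mul w - (N ! : ℚ) • ((w N : H) * e1 ^ N) ∈ Fil N := by
  rw [harmonicExpansion_apply, Finsupp.sum_of_support_subset w hN _ (by simp),
    Finset.sum_range_succ, add_sub_assoc]
  refine add_mem (Submodule.sum_mem _ fun n hn => ?_) (hmul.mul_harmPow_sub_mem (w N).2 N)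
  exact Fil_mono (by simpa using hn)
    (hmul.mul_mem_Fil (Fil_one_eq_H0.ge (w n).2) (hmul.harmPow_mem_Fil n))

lemma harmonicExpansion_injective : Function.Injective (harmonicExpansion mul) := by
  refine (injective_iff_map_eq_zero _).mpr fun w hw => ?_
  by_contra hw_ne
  have h_supp := Finsupp.support_nonempty_iff.mpr hw_ne
  set N := w.support.max' h_supp
  have h_lead := hmul.harmonicExpansion_sub_mem w (N := N) fun n hn =>
    Finset.mem_range_succ_iff.mpr (w.support.le_max' n hn)
  rw [hw, zero_sub, neg_mem_iff, Submodule.smul_mem_iff _ (by positivity)] at h_lead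
  have hwN : w N = 0 := Subtype.ext (eq_zero_of_mul_e1_pow_mem_Fil (w N).2 h_lead)
  exact Finsupp.mem_support_iff.mp (w.support.max'_mem h_supp) hwN

lemma Fil_le_range_harmonicExpansion (n : ℕ) : Fil n ≤ LinearMap.range (harmonicExpansion mul) := by
  induction n with
  | zero => simp [Fil]
  | succ n ih =>
    rw [Fil, Submodule.span_le]
    rintro _ ⟨k, hk : trailingOnes k < n + 1, rfl⟩
    obtain ⟨k₀, hk₀, hk_eq⟩ := exists_admissible_append_replicate k
    have hk₀_mem : eIdx k₀ ∈ H0 := Submodule.subset_span ⟨k₀, hk₀, rfl⟩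
    have h_lead := hmul.mul_harmPow_sub_mem hk₀_mem (trailingOnes k)
    rw [← eIdx_replicate_one, ← eIdx_append, ← hk_eq] at h_lead
    have h_single : mul (eIdx k₀) (harmPow mul (trailingOnes k)) ∈
        LinearMap.range (harmonicExpansion mul) :=
      ⟨Finsupp.single (trailingOnes k) ⟨eIdx k₀, hk₀_mem⟩, by simp [harmonicExpansion_apply]⟩
    have h_smul := sub_mem h_single (ih (Fil_mono (by omega) h_lead))
    rwa [sub_sub_cancel, Submodule.smul_mem_iff _ (by positivity)] at h_smul

lemma range_harmonicExpansion : LinearMap.range (harmonicExpansion mul) = H1 := by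
  refine le_antisymm ?_ ?_
  · rintro _ ⟨w, rfl⟩
    rw [harmonicExpansion_apply]
    refine Submodule.finsuppSum_mem _ _ _ _ fun n _ => Fil_le_H1 (1 + (n + 1) - 1) ?_
    exact hmul.mul_mem_Fil (Fil_one_eq_H0.ge (w n).2) (hmul.harmPow_mem_Fil n)
  · rw [H1, Submodule.span_le]
    rintro _ ⟨k, rfl⟩
    exact hmul.Fil_le_range_harmonicExpansion _ (eIdx_mem_Fil (Nat.lt_succ_self _))

end IsHarmonicProduct

theorem stmt_4
    (mul : H →ₗ[ℚ] H →ₗ[ℚ] H)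
    (hOneL : ∀ l : List ℕ+, mul (eIdx []) (eIdx l) = eIdx l)
    (hOneR : ∀ k : List ℕ+, mul (eIdx k) (eIdx []) = eIdx k)
    (hRec : ∀ (k l : List ℕ+) (a b : ℕ+),
      mul (eIdx (k ++ [a])) (eIdx (l ++ [b])) =
        mul (eIdx (k ++ [a])) (eIdx l) * eE b
        + mul (eIdx k) (eIdx (l ++ [b])) * eE a
        - mul (eIdx k) (eIdx l) * eE (a + b)) :
    (∀ u ∈ H0, ∀ v ∈ H0, mul u v ∈ H0) ∧
    (Function.Injective (fun w : ℕ →₀ H0 => w.sum fun n v => mul (v : H) (harmPow mul n))) ∧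
    (Set.range (fun w : ℕ →₀ H0 => w.sum fun n v => mul (v : H) (harmPow mul n))
      = (H1 : Set H)) := by
  have hmul : IsHarmonicProduct mul := ⟨hOneL, hOneR, hRec⟩
  refine ⟨fun u hu v hv => hmul.mul_mem_H0 hu hv, hmul.harmonicExpansion_injective, ?_⟩
  rw [← hmul.range_harmonicExpansion, LinearMap.coe_range]
  rfl
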